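/- Fix a ∈ (0,1), λ ∈ ℝ, ℏ ∈ (−2, 0), and t ≥ 0. Let v₀(t) = 1 and, for m ≥ 1, v_m(t) = Σ_{j=1}^{m} C(m−1, j−1) ℏ^{j} (1+ℏ)^{m−j} λ^{j} t^{ja}/Γ(1+ja). Then the HAM series Σ_{m=0}^{∞} v_m(t) converges absolutely and its sum equals Σ_{j=0}^{∞} (−λ)^{j} t^{ja}/Γ(1+ja). Consequently, for λ = kπ²/L² the HAM solution of the diffusion equation sums to sin(πx/L) · Σ_{j=0}^{∞} (−kπ²/L²)^{j} t^{ja}/Γ(1+ja), the Mittag–Leffler-type series, independent of the convergence control parameter ℏ. -/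

import Mathlib

open Real Filter

section AuxHAM


lemma aux_gamma_pos (a : ℝ) (ha : 0 < a) (j : ℕ) : 0 < Real.Gamma (1 + (j : ℝ) * a) :=
  Real.Gamma_pos_of_pos (by positivity)

lemma aux_summable {a s : ℝ} (ha : 0 < a) (hs : 0 ≤ s) :
    Summable (fun j : ℕ => s ^ j / Real.Gamma (1 + (j : ℝ) * a)) := by
  set f : ℕ → ℝ := fun j => s ^ j / Real.Gamma (1 + (j : ℝ) * a) with hf
  have hfpos : ∀ j, 0 ≤ f j := fun j =>
    div_nonneg (pow_nonneg hs j) (aux_gamma_pos a ha j).le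
  set K : ℕ := ⌈a⁻¹⌉₊ with hKdef
  have hK1 : 1 ≤ K := Nat.one_le_ceil_iff.2 (by positivity)
  have hKa : 1 ≤ (K : ℝ) * a := by
    have := Nat.le_ceil a⁻¹
    calc (1 : ℝ) = a⁻¹ * a := by field_simp
    _ ≤ (K : ℝ) * a := by
        apply mul_le_mul_of_nonneg_right this ha.le
  -- key step inequality
  have key : ∀ m : ℕ, 1 ≤ (m : ℝ) * a → f (m + K) ≤ s ^ K / (1 + (m : ℝ) * a) * f m := by
    intro m hm
    have h1 : Real.Gamma (2 + (m : ℝ) * a) ≤ Real.Gamma (1 + ((m + K : ℕ) : ℝ) * a) := by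
      apply Real.Gamma_strictMonoOn_Ici.monotoneOn
      · simp only [Set.mem_Ici]; nlinarith [mul_nonneg (Nat.cast_nonneg m) ha.le]
      · simp only [Set.mem_Ici]
        push_cast
        nlinarith [mul_nonneg (Nat.cast_nonneg m) ha.le]
      · push_cast; nlinarith
    have h2 : Real.Gamma (2 + (m : ℝ) * a) = (1 + (m : ℝ) * a) * Real.Gamma (1 + (m : ℝ) * a) := by
      rw [show (2 : ℝ) + (m : ℝ) * a = (1 + (m : ℝ) * a) + 1 by ring, Real.Gamma_add_one]
      positivity
    have hg2pos : 0 < Real.Gamma (2 + (m : ℝ) * a) := Real.Gamma_pos_of_pos (by positivity)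
    calc f (m + K) = s ^ (m + K) / Real.Gamma (1 + ((m + K : ℕ) : ℝ) * a) := rfl
    _ ≤ s ^ (m + K) / Real.Gamma (2 + (m : ℝ) * a) := by
        apply div_le_div_of_nonneg_left (pow_nonneg hs _) hg2pos h1
    _ = s ^ K / (1 + (m : ℝ) * a) * f m := by
        rw [h2, hf]
        rw [pow_add]
        field_simp
  -- decompose into residue classes mod K
  haveI : NeZero K := ⟨by omega⟩
  rw [← (Nat.divModEquiv K).symm.summable_iff]
  have hco : ∀ p : ℕ × Fin K, (f ∘ ⇑(Nat.divModEquiv K).symm) p = f (p.1 * K + (p.2 : ℕ)) :=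
    fun p => rfl
  refine (summable_prod_of_nonneg (f := f ∘ ⇑(Nat.divModEquiv K).symm)
    (fun p => hfpos _)).2 ⟨fun q => Summable.of_finite, ?_⟩
  have hres : ∀ r : ℕ, Summable fun q : ℕ => f (q * K + r) := by
    intro r
    apply summable_of_ratio_norm_eventually_le (r := 1/2) (by norm_num)
    have hNa : ∀ᶠ q : ℕ in atTop, 1 ≤ (q : ℝ) * a ∧ 2 * s ^ K ≤ (q : ℝ) * a := by
      have := tendsto_natCast_atTop_atTop (R := ℝ)
      have h2 : Tendsto (fun q : ℕ => (q : ℝ) * a) atTop atTop :=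
        Tendsto.atTop_mul_const ha this
      filter_upwards [h2.eventually_ge_atTop 1, h2.eventually_ge_atTop (2 * s ^ K)]
        with q h1 h2
      exact ⟨h1, h2⟩
    filter_upwards [hNa] with q ⟨h1, h2⟩
    have hmq : (q : ℝ) ≤ ((q * K + r : ℕ) : ℝ) := by
      push_cast
      have : (1 : ℝ) ≤ (K : ℝ) := by exact_mod_cast hK1
      nlinarith [Nat.cast_nonneg (α := ℝ) q, Nat.cast_nonneg (α := ℝ) r]
    have hm1 : 1 ≤ ((q * K + r : ℕ) : ℝ) * a :=
      h1.trans (mul_le_mul_of_nonneg_right hmq ha.le)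
    have hm2 : 2 * s ^ K ≤ ((q * K + r : ℕ) : ℝ) * a :=
      h2.trans (mul_le_mul_of_nonneg_right hmq ha.le)
    have heq : (q + 1) * K + r = (q * K + r) + K := by ring
    rw [heq]
    have := key (q * K + r) hm1
    rw [Real.norm_eq_abs, Real.norm_eq_abs, abs_of_nonneg (hfpos _),
      abs_of_nonneg (hfpos _)]
    refine this.trans ?_
    apply mul_le_mul_of_nonneg_right _ (hfpos _)
    rw [div_le_iff₀ (by positivity)]
    nlinarith
  refine Summable.congr (f := fun q : ℕ => ∑ r : Fin K, f (q * K + (r : ℕ)))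
    (summable_sum fun r _ => hres r) fun q => ?_
  rw [tsum_fintype]
  rfl

/-- Mittag-Leffler-type coefficient. -/
noncomputable def mlD (a t : ℝ) (j : ℕ) : ℝ :=
  t ^ ((j : ℝ) * a) / Real.Gamma (1 + (j : ℝ) * a)

/-- The HAM double-series term. -/
noncomputable def hamG (a l ℏ t : ℝ) (p : ℕ × ℕ) : ℝ :=
  ((p.1 + p.2).choose p.1 : ℝ) * ℏ ^ (p.1 + 1) * (1 + ℏ) ^ p.2 *
    (l ^ (p.1 + 1) * mlD a t (p.1 + 1))

lemma mlD_nonneg {a t : ℝ} (ha : 0 < a) (ht : 0 ≤ t) (j : ℕ) : 0 ≤ mlD a t j :=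
  div_nonneg (Real.rpow_nonneg ht _) (aux_gamma_pos a ha j).le

lemma mlD_zero {a t : ℝ} : mlD a t 0 = 1 := by
  simp [mlD, Real.Gamma_one]

lemma summable_pow_mul_mlD {a t : ℝ} (ha0 : 0 < a) (ht : 0 ≤ t) {u : ℝ} (hu : 0 ≤ u) :
    Summable fun j : ℕ => u ^ j * mlD a t j := by
  have h := aux_summable ha0 (mul_nonneg hu (Real.rpow_nonneg ht a))
  refine h.congr fun j => ?_
  have hpow : ((t ^ a : ℝ)) ^ j = t ^ ((j : ℝ) * a) := by
    rw [← Real.rpow_natCast (t ^ a) j, ← Real.rpow_mul ht, mul_comm]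
  rw [mul_pow, hpow, mlD, mul_div_assoc]


/-- HAM deformation coefficients: `v₀(t) = 1` and, for `m ≥ 1`,
`v_m(t) = Σ_{j=1}^m C(m-1,j-1) ℏ^j (1+ℏ)^(m-j) λ^j t^(ja)/Γ(1+ja)`. -/
noncomputable def hamV (a l ℏ : ℝ) (m : ℕ) (t : ℝ) : ℝ :=
  if m = 0 then 1
  else
    ∑ j ∈ Finset.Icc 1 m,
      (Nat.choose (m - 1) (j - 1) : ℝ) * ℏ ^ j * (1 + ℏ) ^ (m - j) * l ^ j *
        t ^ ((j : ℝ) * a) / Real.Gamma (1 + (j : ℝ) * a)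

lemma hamV_succ_eq_sum_antidiagonal (a l ℏ t : ℝ) (m : ℕ) :
    hamV a l ℏ (m + 1) t = ∑ p ∈ Finset.HasAntidiagonal.antidiagonal m, hamG a l ℏ t p := by
  rw [Finset.Nat.sum_antidiagonal_eq_sum_range_succ_mk]
  rw [hamV, if_neg (Nat.succ_ne_zero m)]
  rw [show Finset.Icc 1 (m + 1) = Finset.map ⟨fun i => i + 1, add_left_injective 1⟩
      (Finset.range (m + 1)) from ?_]
  · rw [Finset.sum_map]
    refine Finset.sum_congr rfl fun i hi => ?_
    simp only [Finset.mem_range] at hi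
    simp only [Function.Embedding.coeFn_mk, hamG, mlD]
    rw [show i + 1 - 1 = i from rfl, show m + 1 - 1 = m from rfl,
      show m + 1 - (i + 1) = m - i by omega, show i + (m - i) = m by omega]
    ring
  · ext j
    simp only [Finset.mem_Icc, Finset.mem_map, Finset.mem_range,
      Function.Embedding.coeFn_mk]
    constructor
    · rintro ⟨h1, h2⟩; exact ⟨j - 1, by omega, by omega⟩
    · rintro ⟨i, hi, rfl⟩; omega

lemma hamG_inner_hasSum {a l ℏ t : ℝ} (habs : |1 + ℏ| < 1) (j : ℕ) :
    HasSum (fun n : ℕ => hamG a l ℏ t (j, n))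
      (1 / (1 - (1 + ℏ)) ^ (j + 1) * (ℏ ^ (j + 1) * (l ^ (j + 1) * mlD a t (j + 1)))) := by
  have h := (hasSum_choose_mul_geometric_of_norm_lt_one (𝕜 := ℝ) j
    (by rwa [Real.norm_eq_abs])).mul_right (ℏ ^ (j + 1) * (l ^ (j + 1) * mlD a t (j + 1)))
  refine h.congr_fun fun n => ?_
  simp only [hamG]
  rw [Nat.add_comm j n]
  ring


lemma hamG_abs_eq {a l ℏ t : ℝ} (ha0 : 0 < a) (ht : 0 ≤ t) (p : ℕ × ℕ) :
    |hamG a l ℏ t p| =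
      ((p.1 + p.2).choose p.1 : ℝ) * |1 + ℏ| ^ p.2 *
        (|ℏ| ^ (p.1 + 1) * (|l| ^ (p.1 + 1) * mlD a t (p.1 + 1))) := by
  simp only [hamG, abs_mul, abs_pow, Nat.abs_cast,
    abs_of_nonneg (mlD_nonneg ha0 ht _)]
  ring

lemma hamG_abs_summable {a l ℏ t : ℝ} (ha0 : 0 < a) (ht : 0 ≤ t)
    (hℏ2 : -2 < ℏ) (hℏ0 : ℏ < 0) :
    Summable fun p : ℕ × ℕ => |hamG a l ℏ t p| := by
  have habs : |1 + ℏ| < 1 := abs_lt.2 ⟨by linarith, by linarith⟩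
  have h1m : 0 < 1 - |1 + ℏ| := by linarith
  have hnorm : ‖|1 + ℏ|‖ < 1 := by rwa [Real.norm_eq_abs, abs_abs]
  have hts : ∀ j : ℕ, HasSum (fun n => |hamG a l ℏ t (j, n)|)
      (1 / (1 - |1 + ℏ|) ^ (j + 1) *
        (|ℏ| ^ (j + 1) * (|l| ^ (j + 1) * mlD a t (j + 1)))) := by
    intro j
    have h := (hasSum_choose_mul_geometric_of_norm_lt_one (𝕜 := ℝ) j hnorm).mul_right
      (|ℏ| ^ (j + 1) * (|l| ^ (j + 1) * mlD a t (j + 1)))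
    refine h.congr_fun fun n => ?_
    rw [hamG_abs_eq ha0 ht (j, n)]
    rw [show j + n = n + j from Nat.add_comm j n]
  rw [summable_prod_of_nonneg (fun p => abs_nonneg _)]
  refine ⟨fun j => (hts j).summable, ?_⟩
  have hu : (0 : ℝ) ≤ |ℏ| * |l| / (1 - |1 + ℏ|) := by positivity
  have hsum := (summable_nat_add_iff 1).2 (summable_pow_mul_mlD ha0 ht hu)
  refine hsum.congr fun j => ?_
  rw [(hts j).tsum_eq, div_pow, mul_pow]
  field_simp

end AuxHAM

set_option maxHeartbeats 1000000 in
open Real in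
/-- For `a ∈ (0,1)`, `ℏ ∈ (-2,0)` and `t ≥ 0`, the HAM series `Σ_m v_m(t)` converges
absolutely and sums to the Mittag–Leffler-type series `Σ_j (-λ)^j t^(ja)/Γ(1+ja)`;
consequently, with `λ = k π²/L²`, the HAM solution of the diffusion equation sums to
`sin(π x/L) · Σ_j (-k π²/L²)^j t^(ja)/Γ(1+ja)`, independent of `ℏ`. -/
theorem hamSeries_sums_to_mittagLeffler
    (a l ℏ t : ℝ) (ha0 : 0 < a) (ha1 : a < 1) (hℏ : ℏ ∈ Set.Ioo (-2 : ℝ) 0)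
    (ht : 0 ≤ t) :
    Summable (fun m : ℕ => |hamV a l ℏ m t|) ∧
    ∑' m : ℕ, hamV a l ℏ m t =
      ∑' j : ℕ, (-l) ^ j * t ^ ((j : ℝ) * a) / Real.Gamma (1 + (j : ℝ) * a) ∧
    (∀ k L x : ℝ, L ≠ 0 → l = k * π ^ 2 / L ^ 2 →
      ∑' m : ℕ, Real.sin (π * x / L) * hamV a l ℏ m t =
        Real.sin (π * x / L) *
          ∑' j : ℕ, (-(k * π ^ 2 / L ^ 2)) ^ j * t ^ ((j : ℝ) * a) /
            Real.Gamma (1 + (j : ℝ) * a)) := by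
  obtain ⟨hℏ2, hℏ0⟩ := hℏ
  have hℏne : ℏ ≠ 0 := ne_of_lt hℏ0
  have habs : |1 + ℏ| < 1 := abs_lt.2 ⟨by linarith, by linarith⟩
  have hG := hamG_abs_summable (a := a) (l := l) (t := t) ha0 ht hℏ2 hℏ0
  have hGsum : Summable (hamG a l ℏ t) := summable_abs_iff.1 hG
  have hGsig_abs : Summable
      fun x : Σ n : ℕ, {p : ℕ × ℕ // p ∈ Finset.HasAntidiagonal.antidiagonal n} => |hamG a l ℏ t ↑x.2| :=
    (Equiv.summable_iff (Finset.HasAntidiagonal.sigmaAntidiagonalEquivProd (A := ℕ))).2 hG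
  have houter := ((summable_sigma_of_nonneg (fun x => abs_nonneg _)).1 hGsig_abs).2
  have houter' : Summable fun n : ℕ => ∑ p ∈ Finset.HasAntidiagonal.antidiagonal n, |hamG a l ℏ t p| :=
    houter.congr fun n =>
      Finset.tsum_subtype (Finset.HasAntidiagonal.antidiagonal n) (fun p => |hamG a l ℏ t p|)
  have habs_le : ∀ m : ℕ,
      |hamV a l ℏ (m + 1) t| ≤ ∑ p ∈ Finset.HasAntidiagonal.antidiagonal m, |hamG a l ℏ t p| := by
    intro m
    rw [hamV_succ_eq_sum_antidiagonal]
    exact Finset.abs_sum_le_sum_abs _ _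
  have hsucc : Summable fun m : ℕ => |hamV a l ℏ (m + 1) t| :=
    Summable.of_nonneg_of_le (fun m => abs_nonneg _) habs_le houter'
  have hconj1 : Summable fun m : ℕ => |hamV a l ℏ m t| := (summable_nat_add_iff 1).1 hsucc
  have hVsum : Summable fun m : ℕ => hamV a l ℏ m t := summable_abs_iff.1 hconj1
  have hGsig : Summable
      fun x : Σ n : ℕ, {p : ℕ × ℕ // p ∈ Finset.HasAntidiagonal.antidiagonal n} => hamG a l ℏ t ↑x.2 :=
    (Equiv.summable_iff (Finset.HasAntidiagonal.sigmaAntidiagonalEquivProd (A := ℕ))).2 hGsum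
  have e1 : ∑' m : ℕ, hamV a l ℏ m t = 1 + ∑' m : ℕ, hamV a l ℏ (m + 1) t := by
    rw [Summable.tsum_eq_zero_add hVsum]
    congr 1
  have e2 : ∑' m : ℕ, hamV a l ℏ (m + 1) t = ∑' p : ℕ × ℕ, hamG a l ℏ t p := by
    calc ∑' m : ℕ, hamV a l ℏ (m + 1) t
        = ∑' (n : ℕ) (y : {p : ℕ × ℕ // p ∈ Finset.HasAntidiagonal.antidiagonal n}), hamG a l ℏ t ↑y := by
          refine tsum_congr fun n => ?_
          rw [hamV_succ_eq_sum_antidiagonal, ← Finset.tsum_subtype]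
      _ = ∑' x : Σ n : ℕ, {p : ℕ × ℕ // p ∈ Finset.HasAntidiagonal.antidiagonal n}, hamG a l ℏ t ↑x.2 :=
          (Summable.tsum_sigma hGsig).symm
      _ = ∑' p : ℕ × ℕ, hamG a l ℏ t p :=
          Equiv.tsum_eq (Finset.HasAntidiagonal.sigmaAntidiagonalEquivProd (A := ℕ)) (hamG a l ℏ t)
  have e3 : ∑' p : ℕ × ℕ, hamG a l ℏ t p = ∑' j : ℕ, (-l) ^ (j + 1) * mlD a t (j + 1) := by
    rw [Summable.tsum_prod' hGsum fun j => (hamG_inner_hasSum habs j).summable]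
    refine tsum_congr fun j => ?_
    rw [(hamG_inner_hasSum habs j).tsum_eq]
    rw [show (1 : ℝ) - (1 + ℏ) = -ℏ by ring]
    have hq : ℏ / -ℏ = -1 := by field_simp
    calc 1 / (-ℏ) ^ (j + 1) * (ℏ ^ (j + 1) * (l ^ (j + 1) * mlD a t (j + 1)))
        = (ℏ / -ℏ) ^ (j + 1) * (l ^ (j + 1) * mlD a t (j + 1)) := by
          rw [div_pow]; ring
      _ = (-l) ^ (j + 1) * mlD a t (j + 1) := by
          rw [hq, show (-l : ℝ) = -1 * l by ring, mul_pow]; ring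
  have hMLsum : Summable fun j : ℕ =>
      (-l) ^ j * t ^ ((j : ℝ) * a) / Real.Gamma (1 + (j : ℝ) * a) := by
    refine summable_abs_iff.1 ((summable_pow_mul_mlD ha0 ht (abs_nonneg l)).congr fun j => ?_)
    rw [abs_div, abs_mul, abs_pow, abs_neg, abs_of_nonneg (Real.rpow_nonneg ht _),
      abs_of_pos (aux_gamma_pos a ha0 j), mlD, mul_div_assoc]
  have e4 : ∑' j : ℕ, (-l) ^ j * t ^ ((j : ℝ) * a) / Real.Gamma (1 + (j : ℝ) * a) =
      1 + ∑' j : ℕ, (-l) ^ (j + 1) * mlD a t (j + 1) := by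
    rw [Summable.tsum_eq_zero_add hMLsum]
    congr 1
    · norm_num [Real.Gamma_one]
    · refine tsum_congr fun j => ?_
      rw [mlD, mul_div_assoc]
  have h2 : ∑' m : ℕ, hamV a l ℏ m t =
      ∑' j : ℕ, (-l) ^ j * t ^ ((j : ℝ) * a) / Real.Gamma (1 + (j : ℝ) * a) := by
    rw [e1, e2, e3, e4]
  refine ⟨hconj1, h2, fun k L x hL hl => ?_⟩
  rw [tsum_mul_left, h2, hl]
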